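/- For d > 1, a finite automaton B (DFA or PFA) is (carefully) synchronizing if and only if the PFA A_d(B) is carefully synchronizing. -/

import Mathlib

/-- Alphabet of `A_d(B)`: letter `a`, letters `b_i`, and the letters `c_l` of `B`
(indexed by naturals). -/
inductive LB | a | b (i : ℕ) | c (l : ℕ)
deriving DecidableEq

/-- Partial transition function of `A_d(B)` built from an automaton `B` with
states `{1,…,k}` and (partial) transition `γ`; the state `q_j^i` of `A_d(B)` is
encoded as `(i, j)` with `1 ≤ i ≤ k`, `0 ≤ j ≤ d-1`. -/
def δAB (d k : ℕ) (γ : ℕ → ℕ → Option ℕ) : ℕ × ℕ → LB → Option (ℕ × ℕ) := fun p x =>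
  if ¬(1 ≤ p.1 ∧ p.1 ≤ k ∧ p.2 < d) then none else
  match x with
  | LB.a => some (p.1, 0)
  | LB.b l =>
      if ¬(1 ≤ l ∧ l ≤ k) then none
      else if p.1 = l then (if p.2 + 1 < d then some (p.1, p.2 + 1) else none)
      else if l < p.1 then some (p.1, p.2)
      else if p.2 = d - 1 then some (p.1, 0) else none
  | LB.c l =>
      if p.2 = d - 1 then (γ p.1 l).map (fun j => (j, 0)) else none

/-- Extension of a partial transition function to words. -/
def run {Q A : Type*} (δ : Q → A → Option Q) : Q → List A → Option Q
  | q, [] => some q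
  | q, x :: xs => (δ q x).bind (fun q' => run δ q' xs)

/-- One step of the power automaton. -/
def stepSet {Q A : Type*} [DecidableEq Q] (δ : Q → A → Option Q)
    (S : Finset Q) (x : A) : Option (Finset Q) :=
  if ∀ q ∈ S, (δ q x).isSome then some (S.biUnion fun q => (δ q x).toFinset)
  else none

/-- Run of the power automaton on a word. -/
def runSet {Q A : Type*} [DecidableEq Q] (δ : Q → A → Option Q)
    (S : Finset Q) (w : List A) : Option (Finset Q) :=
  List.foldlM (stepSet δ) S w


/-!
In `A_d(B)` the letter `c_l` acts as in `B` on the top level `d - 1` of every chain and is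
undefined elsewhere, while `a` resets every chain to level `0`. The letters `b_i` make the word
`staircase d k` count in base `d` on the chains, so that it lifts every chain from level `0` to
level `d - 1` at once. Hence a synchronizing word `l₁ ⋯ lₙ` of `B` gives the careful
synchronizing word `a (staircase d k) c_{l₁} ⋯ (staircase d k) c_{lₙ}` of `A_d(B)`. Conversely,
only the letters `c_l` change the chain index, so erasing all other letters from a careful
synchronizing word of `A_d(B)` gives a synchronizing word of `B`.
-/

section Run

variable {Q A : Type*} (δ : Q → A → Option Q)

theorem run_append (u v : List A) (q : Q) :
    run δ q (u ++ v) = (run δ q u).bind fun q' => run δ q' v := by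
  induction u generalizing q with
  | nil => rfl
  | cons x xs ih => simp only [List.cons_append, run, Option.bind_assoc, ih]

theorem run_flatten_replicate (blk : List A) (n : ℕ) (f : ℕ → Q)
    (h : ∀ j < n, run δ (f j) blk = some (f (j + 1))) :
    run δ (f 0) (List.replicate n blk).flatten = some (f n) := by
  induction n generalizing f with
  | zero => rfl
  | succ n ih =>
    rw [List.replicate_succ, List.flatten_cons, run_append, h 0 n.succ_pos, Option.bind_some]
    exact ih (fun j => f (j + 1)) fun j hj => h (j + 1) (by omega)

theorem run_flatten_replicate_of_fixed (blk : List A) (n : ℕ) (q : Q)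
    (h : run δ q blk = some q) : run δ q (List.replicate n blk).flatten = some q :=
  run_flatten_replicate δ blk n (fun _ => q) fun _ _ => h

theorem run_flatMap_of_step {Q' A' : Type*} (δ' : Q' → A' → Option Q') (f : Q → Q')
    (g : A → List A') (s : Set Q)
    (hstep : ∀ p ∈ s, ∀ x p', δ p x = some p' → p' ∈ s ∧ run δ' (f p) (g x) = some (f p'))
    (w : List A) {p q : Q} (hp : p ∈ s) (hw : run δ p w = some q) :
    run δ' (f p) (w.flatMap g) = some (f q) := by
  induction w generalizing p with
  | nil => cases hw; rfl
  | cons x xs ih =>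
    obtain ⟨p', hp', hrest⟩ := Option.bind_eq_some_iff.mp hw
    obtain ⟨hs', hrun⟩ := hstep p hp x p' hp'
    rw [List.flatMap_cons, run_append, hrun, Option.bind_some]
    exact ih hs' hrest

end Run

section Transitions

variable {d k : ℕ} (γ : ℕ → ℕ → Option ℕ)

theorem δAB_a {i j : ℕ} (h1 : 1 ≤ i) (h2 : i ≤ k) (h3 : j < d) :
    δAB d k γ (i, j) LB.a = some (i, 0) := by
  simp [δAB, h1, h2, h3]

theorem δAB_b_of_lt {i j l : ℕ} (h2 : i ≤ k) (h3 : j < d) (h4 : 1 ≤ l) (h5 : l < i) :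
    δAB d k γ (i, j) (LB.b l) = some (i, j) := by
  have hne : i ≠ l := by omega
  simp [δAB, h2, h3, h4, h5, hne, (by omega : 1 ≤ i), (by omega : l ≤ k)]

theorem δAB_b_self {i j : ℕ} (h1 : 1 ≤ i) (h2 : i ≤ k) (h3 : j + 1 < d) :
    δAB d k γ (i, j) (LB.b i) = some (i, j + 1) := by
  simp [δAB, h1, h2, h3, (by omega : j < d)]

theorem δAB_b_of_gt {i l : ℕ} (h1 : 1 ≤ i) (h2 : i < l) (h3 : l ≤ k) (hd : 0 < d) :
    δAB d k γ (i, d - 1) (LB.b l) = some (i, 0) := by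
  have hne : i ≠ l := by omega
  have hnlt : ¬ l < i := by omega
  simp [δAB, h1, h3, hne, hnlt, (by omega : i ≤ k), (by omega : 1 ≤ l), (by omega : d - 1 < d)]

theorem δAB_c {i l : ℕ} (h1 : 1 ≤ i) (h2 : i ≤ k) (hd : 0 < d) :
    δAB d k γ (i, d - 1) (LB.c l) = (γ i l).map fun j => (j, 0) := by
  simp [δAB, h1, h2, (by omega : d - 1 < d)]

end Transitions

def staircase (d : ℕ) : ℕ → List LB
  | 0 => []
  | i + 1 => staircase d i ++ (List.replicate (d - 1) (LB.b (i + 1) :: staircase d i)).flatten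

section Staircase

variable {d k : ℕ} (γ : ℕ → ℕ → Option ℕ)

theorem run_staircase_of_lt {i i' j : ℕ} (hi : i < i') (hi' : i' ≤ k) (hj : j < d) :
    run (δAB d k γ) (i', j) (staircase d i) = some (i', j) := by
  induction i with
  | zero => rfl
  | succ i ih =>
    have hfix := ih (by omega)
    rw [staircase, run_append, hfix, Option.bind_some]
    apply run_flatten_replicate_of_fixed
    rw [run, δAB_b_of_lt γ hi' hj (by omega) hi, Option.bind_some, hfix]

theorem run_staircase_of_le {i i' : ℕ} (hd : 0 < d) (h1 : 1 ≤ i') (hi' : i' ≤ i) (hi : i ≤ k) :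
    run (δAB d k γ) (i', 0) (staircase d i) = some (i', d - 1) := by
  induction i with
  | zero => omega
  | succ i ih =>
    rw [staircase, run_append]
    rcases Nat.lt_or_ge i' (i + 1) with hlt | hge
    · have hlift := ih (by omega) (by omega)
      rw [hlift, Option.bind_some]
      apply run_flatten_replicate_of_fixed
      rw [run, δAB_b_of_gt γ h1 (by omega) hi (by omega), Option.bind_some, hlift]
    · obtain rfl : i' = i + 1 := by omega
      rw [run_staircase_of_lt γ (by omega) hi (by omega), Option.bind_some]
      refine run_flatten_replicate _ _ (d - 1) (fun j => (i + 1, j)) fun j hj => ?_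
      rw [run, δAB_b_self γ h1 hi (by omega), Option.bind_some,
        run_staircase_of_lt γ (by omega) hi (by omega)]

theorem run_staircase_c {i l j : ℕ} (hd : 0 < d) (h1 : 1 ≤ i) (h2 : i ≤ k)
    (hγ : γ i l = some j) :
    run (δAB d k γ) (i, 0) (staircase d k ++ [LB.c l]) = some (j, 0) := by
  rw [run_append, run_staircase_of_le γ hd h1 h2 le_rfl, Option.bind_some, run,
    δAB_c γ h1 h2 hd, hγ]
  rfl

end Staircase

def LB.cPart : LB → List ℕ
  | LB.c l => [l]
  | _ => []

theorem run_fst_cPart_of_δAB {d k : ℕ} (γ : ℕ → ℕ → Option ℕ) {p p' : ℕ × ℕ} {x : LB}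
    (h : δAB d k γ p x = some p') : run γ p.1 x.cPart = some p'.1 := by
  cases x with
  | a | b l =>
    have hfst : p'.1 = p.1 := by
      simp only [δAB] at h
      split_ifs at h <;> cases h <;> rfl
    simp [LB.cPart, run, hfst]
  | c l =>
    simp only [δAB] at h
    split_ifs at h
    obtain ⟨j, hj, rfl⟩ := Option.map_eq_some_iff.mp h
    simp [LB.cPart, run, hj]

theorem AdB_careful_sync_iff_general (d k : ℕ) (hd : 1 < d)
    (γ : ℕ → ℕ → Option ℕ) (hγ : ∀ i l j, γ i l = some j → 1 ≤ j ∧ j ≤ k) :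
    (∃ w : List ℕ, ∃ qbar : ℕ, ∀ q ∈ Finset.Icc 1 k, run γ q w = some qbar) ↔
    (∃ w : List LB, ∃ qbar : ℕ × ℕ,
        ∀ q ∈ Finset.Icc 1 k ×ˢ Finset.range d, run (δAB d k γ) q w = some qbar) := by
  constructor
  · rintro ⟨w, qbar, hw⟩
    refine ⟨LB.a :: w.flatMap (fun l => staircase d k ++ [LB.c l]), (qbar, 0), ?_⟩
    rintro ⟨i, j⟩ hq
    simp only [Finset.mem_product, Finset.mem_Icc, Finset.mem_range] at hq
    obtain ⟨⟨h1, h2⟩, h3⟩ := hq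
    rw [run, δAB_a γ h1 h2 h3, Option.bind_some]
    refine run_flatMap_of_step γ _ (fun i => (i, 0)) _ (Set.Icc 1 k) ?_ w ⟨h1, h2⟩
      (hw i (Finset.mem_Icc.mpr ⟨h1, h2⟩))
    rintro p ⟨hp1, hp2⟩ l p' hp'
    exact ⟨hγ p l p' hp', run_staircase_c γ (by omega) hp1 hp2 hp'⟩
  · rintro ⟨w, qbar, hw⟩
    refine ⟨w.flatMap LB.cPart, qbar.1, fun q hq => ?_⟩
    have hmem : (q, 0) ∈ Finset.Icc 1 k ×ˢ Finset.range d := by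
      simp only [Finset.mem_product, Finset.mem_range]
      exact ⟨hq, by omega⟩
    exact run_flatMap_of_step _ γ Prod.fst LB.cPart Set.univ
      (fun _ _ _ _ h => ⟨trivial, run_fst_cPart_of_δAB γ h⟩) w trivial (hw _ hmem)

/-- Theorem 2: for `d > 1`, the automaton `B` (a DFA or PFA on states `{1,…,k}`
with transition `γ`) is (carefully) synchronizing if and only if `A_d(B)` is
carefully synchronizing. -/
theorem AdB_careful_sync_iff (d k : ℕ) (hd : 1 < d) (hk : 1 ≤ k)
    (γ : ℕ → ℕ → Option ℕ) (hγ : ∀ i l j, γ i l = some j → 1 ≤ j ∧ j ≤ k) :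
    (∃ w : List ℕ, ∃ qbar : ℕ, ∀ q ∈ Finset.Icc 1 k, run γ q w = some qbar) ↔
    (∃ w : List LB, ∃ qbar : ℕ × ℕ,
        ∀ q ∈ Finset.Icc 1 k ×ˢ Finset.range d, run (δAB d k γ) q w = some qbar) :=
  AdB_careful_sync_iff_general d k hd γ hγ
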